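/- Let G = (V,E) be a connected simple graph with diameter D, maximum degree Δ(G), and mixed metric dimension β_M(G). Then |V| + |E| ≤ D^{β_M(G)} + β_M(G)·(Δ(G) + 1). -/

import Mathlib

/-!
Fix a minimum mixed resolving set `S`, `|S| = k`. The distance vectors to `S` of the elements of
`V ∪ E` are pairwise distinct with entries in `{0, …, D}`. Those without a zero entry lie in
`{1, …, D}^S`, so there are at most `D^k` of them. The entry for `w ∈ S` vanishes only at the
vertex `w` and at the `deg w ≤ Δ` edges incident to `w`, so at most `k(Δ + 1)` elements have a
zero entry.
-/

open SimpleGraph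

/-- Distance from a vertex `w` to an edge `e` (as a `Sym2`). -/
noncomputable def edist {V : Type*} (G : SimpleGraph V) (w : V) (e : Sym2 V) : Nat :=
  Sym2.lift ⟨fun u v => min (G.dist w u) (G.dist w v), fun u v => min_comm _ _⟩ e

/-- `S` is a mixed resolving set: every two distinct elements of `V ∪ E`
are distinguished by the distance to some vertex of `S`. -/
def MixedResolvingSet {V : Type*} (G : SimpleGraph V) (S : Set V) : Prop :=
  (∀ u v : V, u ≠ v → ∃ w ∈ S, G.dist w u ≠ G.dist w v) ∧
  (∀ e ∈ G.edgeSet, ∀ f ∈ G.edgeSet, e ≠ f → ∃ w ∈ S, edist G w e ≠ edist G w f) ∧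
  (∀ u : V, ∀ e ∈ G.edgeSet, ∃ w ∈ S, G.dist w u ≠ edist G w e)

/-- The mixed metric dimension of `G`. -/
noncomputable def mixedDim {V : Type*} (G : SimpleGraph V) : Nat :=
  sInf {n | ∃ S : Set V, MixedResolvingSet G S ∧ S.ncard = n}

open Finset Function

section
variable {V : Type*} (G : SimpleGraph V)

lemma edist_mk (w a b : V) : edist G w s(a, b) = min (G.dist w a) (G.dist w b) := rfl

lemma edist_diag (w u : V) : edist G w (Sym2.diag u) = G.dist w u := min_self _

lemma edist_le_dist_of_mem {w v : V} {e : Sym2 V} (hv : v ∈ e) : edist G w e ≤ G.dist w v := by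
  induction e with
  | _ a b =>
    rcases Sym2.mem_iff.mp hv with rfl | rfl
    exacts [min_le_left _ _, min_le_right _ _]

lemma edist_le_diam (hG : G.ediam ≠ ⊤) (w : V) (e : Sym2 V) : edist G w e ≤ G.diam :=
  (edist_le_dist_of_mem G e.out_fst_mem).trans (dist_le_diam hG)

variable {G}

lemma edist_eq_zero_iff_mem (hG : G.Connected) {w : V} {e : Sym2 V} :
    edist G w e = 0 ↔ w ∈ e := by
  induction e with
  | _ a b =>
    rw [edist_mk, Nat.min_eq_zero_iff, hG.dist_eq_zero_iff, hG.dist_eq_zero_iff, Sym2.mem_iff]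

lemma exists_edist_ne_of_ne (hG : G.Connected) {z z' : Sym2 V} (h : z ≠ z') :
    ∃ w, edist G w z ≠ edist G w z' := by
  obtain ⟨w, hw⟩ : ∃ w, ¬(w ∈ z ↔ w ∈ z') := by
    by_contra! hzz'
    exact h (Sym2.ext hzz')
  exact ⟨w, fun heq => hw (by rw [← edist_eq_zero_iff_mem hG, ← edist_eq_zero_iff_mem hG, heq])⟩

variable (G)

/-- The elements of `V ∪ E` as elements of `Sym2 V`: a vertex `u` is the diagonal `s(u, u)`.
By `edist_diag`, the distance from `w` to any of them is then `edist G w`. -/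
def SimpleGraph.vertexOrEdge : V ⊕ G.edgeSet → Sym2 V := Sum.elim Sym2.diag Subtype.val

@[simp]
lemma SimpleGraph.vertexOrEdge_inl (u : V) : G.vertexOrEdge (.inl u) = Sym2.diag u := rfl

@[simp]
lemma SimpleGraph.vertexOrEdge_inr (e : G.edgeSet) : G.vertexOrEdge (.inr e) = e := rfl

lemma SimpleGraph.vertexOrEdge_injective : Injective G.vertexOrEdge :=
  Sym2.diag_injective.sumElim Subtype.val_injective fun u e he =>
    G.not_isDiag_of_mem_edgeSet e.2 (he ▸ Sym2.diag_isDiag u)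

variable {G}

lemma mixedResolvingSet_iff_injective {S : Set V} :
    MixedResolvingSet G S ↔ Injective fun x (w : S) => edist G w (G.vertexOrEdge x) := by
  rw [injective_iff_pairwise_ne]
  simp only [Pairwise, onFun, ne_eq, funext_iff, not_forall, exists_prop, Sum.forall,
    Subtype.forall, Sum.inl.injEq, Sum.inr.injEq, reduceCtorEq, SimpleGraph.vertexOrEdge_inl,
    SimpleGraph.vertexOrEdge_inr, edist_diag, not_false_eq_true, forall_const, Subtype.mk.injEq]
  refine ⟨fun ⟨hV, hE, hVE⟩ => ⟨fun u => ⟨hV u, hVE u⟩, fun e he => ⟨fun u => ?_, hE e he⟩⟩,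
    fun h => ⟨fun u => (h.1 u).1, fun e he => (h.2 e he).2, fun u => (h.1 u).2⟩⟩
  obtain ⟨w, hw, hne⟩ := hVE u e he
  exact ⟨w, hw, Ne.symm hne⟩

lemma mixedResolvingSet_univ (hG : G.Connected) : MixedResolvingSet G Set.univ :=
  mixedResolvingSet_iff_injective.2 fun x y hxy => G.vertexOrEdge_injective <| by
    by_contra hne
    obtain ⟨w, hw⟩ := exists_edist_ne_of_ne hG hne
    exact hw (congrFun hxy ⟨w, trivial⟩)

lemma exists_finset_mixedResolvingSet_card_eq_mixedDim [Finite V] (hG : G.Connected) :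
    ∃ s : Finset V, MixedResolvingSet G s ∧ #s = mixedDim G := by
  obtain ⟨S, hS, hcard⟩ :=
    Nat.sInf_mem (s := {n | ∃ S : Set V, MixedResolvingSet G S ∧ S.ncard = n})
      ⟨_, Set.univ, mixedResolvingSet_univ hG, rfl⟩
  obtain ⟨s, rfl⟩ := S.toFinite.exists_finset_coe
  exact ⟨s, hS, by rwa [← Set.ncard_coe_finset]⟩

variable (G) [Fintype V] [DecidableEq V] [DecidableRel G.Adj]

lemma card_filter_mem_vertexOrEdge_le (w : V) :
    #{x | w ∈ G.vertexOrEdge x} ≤ G.degree w + 1 :=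
  calc #{x | w ∈ G.vertexOrEdge x} ≤ #(insert (Sym2.diag w) (G.incidenceFinset w)) := by
        refine card_le_card_of_injOn _ ?_ G.vertexOrEdge_injective.injOn
        rintro (u | ⟨e, he⟩) hx <;> replace hx := (mem_filter.1 hx).2
        · obtain rfl : w = u := by simpa [Sym2.diag] using hx
          exact mem_insert_self _ _
        · exact mem_insert_of_mem <| (G.mem_incidenceFinset w e).2 ⟨he, hx⟩
    _ ≤ G.degree w + 1 := by
        rw [← card_incidenceFinset_eq_degree]
        exact card_insert_le _ _

lemma card_filter_exists_mem_vertexOrEdge_le (s : Finset V) :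
    #{x | ∃ w ∈ s, w ∈ G.vertexOrEdge x} ≤ #s * (G.maxDegree + 1) := by
  calc #{x | ∃ w ∈ s, w ∈ G.vertexOrEdge x}
      ≤ #(s.biUnion fun w => {x | w ∈ G.vertexOrEdge x}) :=
        card_le_card fun x hx => by simpa using hx
    _ ≤ #s * (G.maxDegree + 1) := card_biUnion_le_card_mul _ _ _ fun w _ =>
        (card_filter_mem_vertexOrEdge_le G w).trans (Nat.succ_le_succ (G.degree_le_maxDegree w))

end

lemma card_filter_forall_pos_le_pow {α ι : Type*} [Fintype α] [Fintype ι] [DecidableEq ι]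
    {r : α → ι → ℕ} (hr : Injective r) {D : ℕ} (hD : ∀ x i, r x i ≤ D) :
    #{x | ∀ i, 0 < r x i} ≤ D ^ Fintype.card ι :=
  calc #{x | ∀ i, 0 < r x i} ≤ #(Fintype.piFinset fun _ : ι => Icc 1 D) :=
        card_le_card_of_injOn r (fun x hx => Fintype.mem_piFinset.2 fun i =>
          mem_Icc.2 ⟨(mem_filter.1 hx).2 i, hD x i⟩) hr.injOn
    _ = D ^ Fintype.card ι := by simp

theorem stmt_6 {V : Type*} [Fintype V] [DecidableEq V] (G : SimpleGraph V)
    [DecidableRel G.Adj] (hG : G.Connected) :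
    Fintype.card V + G.edgeFinset.card ≤
      G.diam ^ mixedDim G + mixedDim G * (G.maxDegree + 1) := by
  obtain ⟨s, hs, hcard⟩ := exists_finset_mixedResolvingSet_card_eq_mixedDim hG
  have : Nonempty V := hG.nonempty
  have hdiam : G.ediam ≠ ⊤ := G.connected_iff_ediam_ne_top.1 hG
  set r : V ⊕ G.edgeSet → s → ℕ := fun x w => edist G w (G.vertexOrEdge x)
  have hzero : ∀ x ∈ univ, ¬(∀ w, 0 < r x w) → ∃ w ∈ s, w ∈ G.vertexOrEdge x := by
    intro x _ hx
    obtain ⟨w, hw⟩ := not_forall.1 hx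
    exact ⟨w, w.2, (edist_eq_zero_iff_mem hG).1 (Nat.eq_zero_of_not_pos hw)⟩
  rw [← hcard]
  calc Fintype.card V + #G.edgeFinset = Fintype.card (V ⊕ G.edgeSet) := by
        rw [Fintype.card_sum, edgeFinset_card]
    _ = #{x | ∀ w, 0 < r x w} + #{x | ¬∀ w, 0 < r x w} := (card_filter_add_card_filter_not _).symm
    _ ≤ G.diam ^ #s + #s * (G.maxDegree + 1) := by
        gcongr
        · simpa using card_filter_forall_pos_le_pow (mixedResolvingSet_iff_injective.1 hs)
            fun x w => edist_le_diam G hdiam w _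
        · exact (card_le_card (monotone_filter_right _ hzero)).trans
            (card_filter_exists_mem_vertexOrEdge_le G s)
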